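/- Let G be a group and H ≤ G. For all ordinals α ≤ λ, Z_α(E_α(H)) ≤ E_λ(H); that is, the α-th hypercenter of the α-th envelope is contained in every later envelope. -/

import Mathlib

open Ordinal

section Defs
variable {G : Type*} [Group G]

attribute [local instance] Classical.propDecidable

/-- The commutator `[x,y] = x⁻¹y⁻¹xy` as in the paper. -/
def pcomm (x y : G) : G := x⁻¹ * y⁻¹ * x * y

/-- Transfinite upper central series of the (sub)set `E` of `G`, viewed inside `G`. -/
noncomputable def ZSet (E : Set G) (α : Ordinal) : Set G :=
  if α = 0 then {1}
  else if hs : ∃ β < α, α = β + 1 then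
    {x | x ∈ E ∧ ∀ g ∈ E, pcomm x g ∈ ZSet E hs.choose}
  else ⋃ (β : Ordinal) (_ : β < α), ZSet E β
termination_by α
decreasing_by all_goals first | assumption | exact hs.choose_spec.1

/-- Transfinite iterated centralizers `C_E^α(H)` of `H` inside the ambient set `E ⊆ G`. -/
noncomputable def CIter (E H : Set G) (α : Ordinal) : Set G :=
  if α = 0 then {1}
  else if hs : ∃ β < α, α = β + 1 then
    {x | x ∈ E ∧ (∀ β < α, ∀ a : G, a ∈ CIter E H β ↔ x * a * x⁻¹ ∈ CIter E H β)
       ∧ ∀ h ∈ H, pcomm x h ∈ CIter E H hs.choose}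
  else ⋃ (β : Ordinal) (_ : β < α), CIter E H β
termination_by α
decreasing_by all_goals first | assumption | exact hs.choose_spec.1

/-- Transfinite envelopes `E_α(H)` of `H ⊆ G`. -/
noncomputable def Env (H : Set G) (α : Ordinal) : Set G :=
  if α = 0 then Set.univ
  else if hs : ∃ β < α, α = β + 1 then
    {g | g ∈ Env H hs.choose ∧
      ∀ c ∈ CIter (Env H hs.choose) H (hs.choose + 1),
        pcomm g c ∈ CIter (Env H hs.choose) H hs.choose}
  else ⋂ (β : Ordinal) (_ : β < α), Env H β
termination_by α
decreasing_by all_goals first | assumption | exact hs.choose_spec.1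

end Defs

/-!
Write `K ρ = C^ρ_{E_ρ}(H)`. A first transfinite induction on `α` shows, simultaneously, that the
iterated centralisers stabilise (`C^β_{E_α}(H) = K β` for `β ≤ α`), that `K α` is a subgroup, and
that `β ↦ C^β_{E_α}(H)` is increasing up to `α + 1`; consequently `K γ ⊆ E_λ` for all `γ` and `λ`.
A second induction shows `Z_σ(E_μ) ⊆ K σ` for `σ ≤ μ`: the commutators of an element of
`Z_{δ+1}(E_μ)` lie in `Z_δ(E_μ) ⊆ K δ`, which puts the element in every envelope and makes it
normalise each `K ρ` with `ρ ≤ δ`. Hence `Z_α(E_α) ⊆ K α ⊆ E_λ`.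
-/

open Order

section Commutator

variable {G : Type*} [Group G]

@[simp]
lemma pcomm_one_left (g : G) : pcomm 1 g = 1 := by simp [pcomm]

@[simp]
lemma pcomm_inv (x y : G) : (pcomm x y)⁻¹ = pcomm y x := by simp [pcomm, mul_assoc]

lemma pcomm_mul_left (x y c : G) : pcomm (x * y) c = y⁻¹ * pcomm x c * y * pcomm y c := by
  simp only [pcomm]; group

lemma pcomm_inv_left (x c : G) : pcomm x⁻¹ c = x * (pcomm x c)⁻¹ * x⁻¹ := by
  simp only [pcomm]; group

lemma pcomm_eq_inv_mul_conj (x c : G) : pcomm x c = x⁻¹ * (c⁻¹ * x * c) := by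
  simp only [pcomm]; group

lemma inv_mul_mul_eq_pcomm_inv_mul (g c : G) : g⁻¹ * c * g = pcomm g c⁻¹ * c := by
  simp [pcomm]

lemma mul_mul_inv_eq_mul_conj_pcomm (x a : G) : x * a * x⁻¹ = a * (x * pcomm x a * x⁻¹) := by
  simp only [pcomm]; group

end Commutator

section Unfolding

variable {G : Type*} [Group G] {S E : Set G} {x : G}

lemma ZSet_zero : ZSet E 0 = {1} := by rw [ZSet]; simp

lemma mem_ZSet_add_one {γ : Ordinal} :
    x ∈ ZSet E (γ + 1) ↔ x ∈ E ∧ ∀ g ∈ E, pcomm x g ∈ ZSet E γ := by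
  have hs : ∃ β < γ + 1, γ + 1 = β + 1 := ⟨γ, lt_add_one γ, rfl⟩
  rw [ZSet, if_neg (pos_of_gt (lt_add_one γ)).ne', dif_pos hs,
    add_one_inj.mp hs.choose_spec.2.symm]
  rfl

lemma ZSet_limit {α : Ordinal} (hα : IsSuccLimit α) : ZSet E α = ⋃ β < α, ZSet E β := by
  rw [ZSet, if_neg hα.ne_zero, dif_neg]
  rintro ⟨β, -, rfl⟩
  exact not_isSuccLimit_add_one β hα

lemma CIter_zero : CIter E S 0 = {1} := by rw [CIter]; simp

lemma mem_CIter_add_one {γ : Ordinal} :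
    x ∈ CIter E S (γ + 1) ↔ x ∈ E ∧ (∀ β ≤ γ, x ∈ Subgroup.normalizer (CIter E S β)) ∧
      ∀ h ∈ S, pcomm x h ∈ CIter E S γ := by
  have hs : ∃ β < γ + 1, γ + 1 = β + 1 := ⟨γ, lt_add_one γ, rfl⟩
  rw [CIter, if_neg (pos_of_gt (lt_add_one γ)).ne', dif_pos hs,
    add_one_inj.mp hs.choose_spec.2.symm]
  simp only [Set.mem_ofPred_eq, lt_add_one_iff, Subgroup.mem_set_normalizer_iff]

lemma CIter_limit {α : Ordinal} (hα : IsSuccLimit α) : CIter E S α = ⋃ β < α, CIter E S β := by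
  rw [CIter, if_neg hα.ne_zero, dif_neg]
  rintro ⟨β, -, rfl⟩
  exact not_isSuccLimit_add_one β hα

lemma Env_zero : Env S 0 = Set.univ := by rw [Env]; simp

lemma mem_Env_add_one {γ : Ordinal} :
    x ∈ Env S (γ + 1) ↔ x ∈ Env S γ ∧
      ∀ c ∈ CIter (Env S γ) S (γ + 1), pcomm x c ∈ CIter (Env S γ) S γ := by
  have hs : ∃ β < γ + 1, γ + 1 = β + 1 := ⟨γ, lt_add_one γ, rfl⟩
  rw [Env, if_neg (pos_of_gt (lt_add_one γ)).ne', dif_pos hs,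
    add_one_inj.mp hs.choose_spec.2.symm]
  rfl

lemma Env_limit {α : Ordinal} (hα : IsSuccLimit α) : Env S α = ⋂ β < α, Env S β := by
  rw [Env, if_neg hα.ne_zero, dif_neg]
  rintro ⟨β, -, rfl⟩
  exact not_isSuccLimit_add_one β hα

end Unfolding

section Basic

variable {G : Type*} [Group G] {S E : Set G}

lemma one_mem_CIter (hE : 1 ∈ E) (β : Ordinal) : 1 ∈ CIter E S β := by
  induction β using Ordinal.limitRecOn with
  | zero => simp [CIter_zero]
  | add_one γ ih =>
    exact mem_CIter_add_one.mpr ⟨hE, fun _ _ ↦ Subgroup.one_mem _, fun _ _ ↦ by simpa using ih⟩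
  | limit _ hα ih =>
    rw [CIter_limit hα, Set.mem_iUnion₂]
    exact ⟨0, hα.bot_lt, ih 0 hα.bot_lt⟩

lemma CIter_subset (hE : 1 ∈ E) (β : Ordinal) : CIter E S β ⊆ E := by
  induction β using Ordinal.limitRecOn with
  | zero => simpa [CIter_zero]
  | add_one γ _ => exact fun x hx ↦ (mem_CIter_add_one.mp hx).1
  | limit _ hα ih =>
    rw [CIter_limit hα]
    exact Set.iUnion₂_subset ih

lemma mem_Env_iff {x : G} {α : Ordinal} : x ∈ Env S α ↔
    ∀ κ < α, ∀ c ∈ CIter (Env S κ) S (κ + 1), pcomm x c ∈ CIter (Env S κ) S κ := by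
  induction α using Ordinal.limitRecOn with
  | zero => simp [Env_zero]
  | add_one γ ih =>
    simp only [mem_Env_add_one, ih, lt_add_one_iff, le_iff_lt_or_eq, or_imp, forall_and,
      forall_eq]
  | limit α hα ih =>
    rw [Env_limit hα, Set.mem_iInter₂]
    refine ⟨fun hx κ hκ ↦ ih _ (hα.add_one_lt hκ) |>.mp (hx _ (hα.add_one_lt hκ)) κ
      (lt_add_one κ), fun hx β hβ ↦ (ih β hβ).mpr fun κ hκ ↦ hx κ (hκ.trans hβ)⟩

lemma Env_antitone : Antitone (Env S) := fun _ _ hαβ _ hx ↦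
  mem_Env_iff.mpr fun κ hκ ↦ mem_Env_iff.mp hx κ (hκ.trans_le hαβ)

lemma one_mem_Env (α : Ordinal) : (1 : G) ∈ Env S α :=
  mem_Env_iff.mpr fun κ _ _ _ ↦ by simpa using one_mem_CIter (one_mem_Env κ) κ
termination_by α

end Basic

section SubgroupSet

variable {G : Type*} [Group G]

structure IsSubgroupSet (X : Set G) : Prop where
  one_mem : 1 ∈ X
  mul_mem {x y : G} : x ∈ X → y ∈ X → x * y ∈ X
  inv_mem {x : G} : x ∈ X → x⁻¹ ∈ X

variable {X : Set G}

lemma IsSubgroupSet.conj_mem (hX : IsSubgroupSet X) {x a : G} (hx : x ∈ X) (ha : a ∈ X) :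
    x * a * x⁻¹ ∈ X :=
  hX.mul_mem (hX.mul_mem hx ha) (hX.inv_mem hx)

lemma IsSubgroupSet.mem_normalizer (hX : IsSubgroupSet X) {x : G} (hx : x ∈ X) :
    x ∈ Subgroup.normalizer X := fun a ↦
  ⟨hX.conj_mem hx, fun h ↦ by simpa [mul_assoc] using hX.conj_mem (hX.inv_mem hx) h⟩

end SubgroupSet

section CIter

variable {G : Type*} [Group G] {S E E' : Set G}

lemma CIter_add_one_eq_inter (hE : E' ⊆ E) {ε : Ordinal}
    (h : ∀ γ ≤ ε, CIter E' S γ = CIter E S γ) : CIter E' S (ε + 1) = CIter E S (ε + 1) ∩ E' := by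
  ext x
  have := @hE x
  simp +contextual only [mem_CIter_add_one, h, le_refl, Set.mem_inter_iff]
  tauto

lemma CIter_eq_of_subset (hE : E' ⊆ E) {β : Ordinal} (h : ∀ γ ≤ β, CIter E S γ ⊆ E') :
    CIter E' S β = CIter E S β := by
  induction β using WellFoundedLT.induction with
  | _ β ih =>
  cases β using Ordinal.limitRecOn with
  | zero => simp only [CIter_zero]
  | add_one γ _ =>
    rw [CIter_add_one_eq_inter hE fun δ hδ ↦ ih δ (lt_add_one_iff.mpr hδ)
      fun ε hε ↦ h ε (hε.trans (hδ.trans (lt_add_one γ).le)), Set.inter_eq_left]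
    exact h _ le_rfl
  | limit _ hβ _ =>
    simp only [CIter_limit hβ]
    exact Set.iUnion₂_congr fun γ hγ ↦ ih γ hγ fun δ hδ ↦ h δ (hδ.trans hγ.le)

lemma CIter_monotoneOn {Λ : Ordinal} (h : ∀ ε < Λ, CIter E S ε ⊆ CIter E S (ε + 1)) :
    MonotoneOn (CIter E S) (Set.Iic Λ) := by
  intro β _ β' hβ' hββ'
  induction β' using Ordinal.limitRecOn with
  | zero => rw [nonpos_iff_eq_zero.mp hββ']
  | add_one ε ih =>
    obtain hββ' | rfl := hββ'.lt_or_eq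
    · have hεΛ : ε < Λ := add_one_le_iff.mp hβ'
      exact (ih hεΛ.le (lt_add_one_iff.mp hββ')).trans (h ε hεΛ)
    · exact le_rfl
  | limit _ hα _ =>
    obtain hββ' | rfl := hββ'.lt_or_eq
    · rw [CIter_limit hα]
      exact Set.subset_biUnion_of_mem (u := fun γ ↦ CIter E S γ) hββ'
    · exact le_rfl

lemma exists_mem_CIter_add_one_of_lt {Λ : Ordinal} (hmono : MonotoneOn (CIter E S) (Set.Iic Λ))
    {x : G} {γ δ : Ordinal} (hx : x ∈ CIter E S γ) (hγ : γ ≤ Λ) (hδ : δ < γ) :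
    ∃ ε, δ ≤ ε ∧ ε < γ ∧ x ∈ CIter E S (ε + 1) := by
  cases γ using Ordinal.limitRecOn with
  | zero => simp at hδ
  | add_one ε _ => exact ⟨ε, lt_add_one_iff.mp hδ, lt_add_one ε, hx⟩
  | limit _ hlim _ =>
    rw [CIter_limit hlim, Set.mem_iUnion₂] at hx
    obtain ⟨β, hβγ, hxβ⟩ := hx
    have hlt : max β δ + 1 < γ := hlim.add_one_lt (max_lt hβγ hδ)
    refine ⟨max β δ, le_max_right β δ, (lt_add_one _).trans hlt, ?_⟩
    exact hmono (hβγ.le.trans hγ) (hlt.le.trans hγ)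
      ((le_max_left β δ).trans (lt_add_one _).le) hxβ

lemma mem_normalizer_CIter_of_lt {Λ : Ordinal} (hmono : MonotoneOn (CIter E S) (Set.Iic Λ))
    {x : G} {γ δ : Ordinal} (hx : x ∈ CIter E S γ) (hγ : γ ≤ Λ) (hδ : δ < γ) :
    x ∈ Subgroup.normalizer (CIter E S δ) := by
  obtain ⟨ε, hδε, -, hxε⟩ := exists_mem_CIter_add_one_of_lt hmono hx hγ hδ
  exact (mem_CIter_add_one.mp hxε).2.1 δ hδε

lemma pcomm_mem_CIter {Λ : Ordinal} (hmono : MonotoneOn (CIter E S) (Set.Iic Λ))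
    {x h : G} {γ : Ordinal} (hx : x ∈ CIter E S γ) (hγ : γ ≤ Λ) (hh : h ∈ S) :
    pcomm x h ∈ CIter E S γ := by
  obtain rfl | hγ0 := eq_zero_or_pos γ
  · rw [CIter_zero, Set.mem_singleton_iff] at hx ⊢
    simp [hx]
  obtain ⟨ε, -, hεγ, hxε⟩ := exists_mem_CIter_add_one_of_lt hmono hx hγ hγ0
  exact hmono (hεγ.le.trans hγ) hγ hεγ.le ((mem_CIter_add_one.mp hxε).2.2 h hh)

lemma isSubgroupSet_CIter_of_isSuccLimit {Λ : Ordinal} (hmono : MonotoneOn (CIter E S) (Set.Iic Λ))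
    (hΛ : IsSuccLimit Λ) (hsub : ∀ β < Λ, IsSubgroupSet (CIter E S β)) : IsSubgroupSet (CIter E S Λ) := by
  have mem_max {x y : G} (hx : x ∈ CIter E S Λ) (hy : y ∈ CIter E S Λ) :
      ∃ β < Λ, x ∈ CIter E S β ∧ y ∈ CIter E S β := by
    rw [CIter_limit hΛ, Set.mem_iUnion₂] at hx hy
    obtain ⟨γ, hγ, hxγ⟩ := hx
    obtain ⟨δ, hδ, hyδ⟩ := hy
    have hmax : max γ δ < Λ := max_lt hγ hδ
    exact ⟨max γ δ, hmax, hmono hγ.le hmax.le (le_max_left γ δ) hxγ,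
      hmono hδ.le hmax.le (le_max_right γ δ) hyδ⟩
  have mem_of_lt {β : Ordinal} (hβ : β < Λ) : CIter E S β ⊆ CIter E S Λ :=
    hmono hβ.le Set.self_mem_Iic hβ.le
  refine ⟨mem_of_lt hΛ.bot_lt (hsub 0 hΛ.bot_lt).one_mem, fun hx hy ↦ ?_, fun hx ↦ ?_⟩
  · obtain ⟨β, hβ, hxβ, hyβ⟩ := mem_max hx hy
    exact mem_of_lt hβ ((hsub β hβ).mul_mem hxβ hyβ)
  · obtain ⟨β, hβ, hxβ, -⟩ := mem_max hx hx
    exact mem_of_lt hβ ((hsub β hβ).inv_mem hxβ)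

lemma CIter_subset_CIter_add_one_of_isSubgroupSet {Λ : Ordinal} (hmono : MonotoneOn (CIter E S) (Set.Iic Λ))
    (hE : 1 ∈ E) (hsub : IsSubgroupSet (CIter E S Λ)) :
    CIter E S Λ ⊆ CIter E S (Λ + 1) := fun x hx ↦ by
  refine mem_CIter_add_one.mpr ⟨CIter_subset hE Λ hx, fun β hβ ↦ ?_,
    fun h hh ↦ pcomm_mem_CIter hmono hx le_rfl hh⟩
  obtain hβ | rfl := hβ.lt_or_eq
  · exact mem_normalizer_CIter_of_lt hmono hx le_rfl hβ
  · exact hsub.mem_normalizer hx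

end CIter

section Invariant

universe u

variable {G : Type*} [Group G] {S : Set G}

structure EnvInvariant (S : Set G) (α : Ordinal) : Prop where
  CIter_eq : ∀ β ≤ α, CIter (Env S α) S β = CIter (Env S β) S β
  isSubgroupSet : IsSubgroupSet (CIter (Env S α) S α)
  monotoneOn : MonotoneOn (CIter (Env S α) S) (Set.Iic (α + 1))

namespace EnvInvariant

variable {κ : Ordinal}

lemma CIter_subset_CIter_add_one (hκ : EnvInvariant S κ) :
    CIter (Env S κ) S κ ⊆ CIter (Env S κ) S (κ + 1) :=
  hκ.monotoneOn (lt_add_one κ).le Set.self_mem_Iic (lt_add_one κ).le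

lemma inv_mul_mul_mem (hκ : EnvInvariant S κ) {g c : G} (hg : g ∈ Env S (κ + 1))
    (hc : c ∈ CIter (Env S κ) S κ) :
    g⁻¹ * c * g ∈ CIter (Env S κ) S κ := by
  rw [inv_mul_mul_eq_pcomm_inv_mul]
  refine hκ.isSubgroupSet.mul_mem ?_ hc
  exact (mem_Env_add_one.mp hg).2 _
    (hκ.CIter_subset_CIter_add_one (hκ.isSubgroupSet.inv_mem hc))

lemma CIter_subset_Env_add_one (hκ : EnvInvariant S κ) :
    CIter (Env S κ) S κ ⊆ Env S (κ + 1) := fun c hc ↦ by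
  refine mem_Env_add_one.mpr ⟨CIter_subset (one_mem_Env κ) κ hc, fun k hk ↦ ?_⟩
  have hk' : k⁻¹ ∈ Subgroup.normalizer (CIter (Env S κ) S κ) :=
    Subgroup.inv_mem _ ((mem_CIter_add_one.mp hk).2.1 κ le_rfl)
  rw [pcomm_eq_inv_mul_conj]
  refine hκ.isSubgroupSet.mul_mem (hκ.isSubgroupSet.inv_mem hc) ?_
  simpa using (hk' c).mp hc

end EnvInvariant

lemma subset_Env_of_forall_lt {α : Ordinal} {X : Set G} (h : ∀ κ < α, X ⊆ Env S (κ + 1)) :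
    X ⊆ Env S α :=
  fun _ hx ↦ mem_Env_iff.mpr fun κ hκ ↦ mem_Env_iff.mp (h κ hκ hx) κ (lt_add_one κ)

lemma CIter_Env_self_subset_Env_of_invariant {α γ : Ordinal.{u}} (hIH : ∀ κ < α, EnvInvariant S κ) :
    CIter (Env S γ) S γ ⊆ Env S α := by
  refine subset_Env_of_forall_lt fun κ hκ ↦ ?_
  obtain hκγ | hγκ := lt_or_ge κ γ
  · exact (CIter_subset (one_mem_Env γ) γ).trans (Env_antitone (add_one_le_iff.mpr hκγ))
  · rw [← (hIH κ hκ).CIter_eq γ hγκ]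
    exact ((hIH κ hκ).monotoneOn (hγκ.trans (lt_add_one κ).le) (lt_add_one κ).le hγκ).trans
      (hIH κ hκ).CIter_subset_Env_add_one

lemma CIter_Env_eq_of_le {α : Ordinal} (hIH : ∀ κ < α, EnvInvariant S κ)
    {β : Ordinal} (hβ : β ≤ α) :
    CIter (Env S α) S β = CIter (Env S β) S β := by
  obtain hβ | rfl := hβ.lt_or_eq
  · refine CIter_eq_of_subset (Env_antitone hβ.le) fun γ hγ ↦ ?_
    rw [(hIH β hβ).CIter_eq γ hγ]
    exact CIter_Env_self_subset_Env_of_invariant hIH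
  · rfl

lemma CIter_Env_subset_add_one_of_lt {α : Ordinal} (hIH : ∀ κ < α, EnvInvariant S κ)
    {ε : Ordinal} (hε : ε < α) :
    CIter (Env S α) S ε ⊆ CIter (Env S α) S (ε + 1) := by
  have hlow : ∀ γ ≤ ε, CIter (Env S α) S γ = CIter (Env S ε) S γ := fun γ hγ ↦ by
    rw [CIter_Env_eq_of_le hIH (hγ.trans hε.le), (hIH ε hε).CIter_eq γ hγ]
  rw [CIter_add_one_eq_inter (Env_antitone hε.le) hlow, hlow ε le_rfl]
  exact Set.subset_inter (hIH ε hε).CIter_subset_CIter_add_one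
    (CIter_Env_self_subset_Env_of_invariant hIH)

lemma mul_mem_Env {α : Ordinal} (hIH : ∀ κ < α, EnvInvariant S κ)
    {x y : G} (hx : x ∈ Env S α) (hy : y ∈ Env S α) : x * y ∈ Env S α := by
  refine mem_Env_iff.mpr fun κ hκ k hk ↦ ?_
  have hyκ : y ∈ Env S (κ + 1) := Env_antitone (add_one_le_iff.mpr hκ) hy
  rw [pcomm_mul_left]
  exact (hIH κ hκ).isSubgroupSet.mul_mem
    ((hIH κ hκ).inv_mul_mul_mem hyκ (mem_Env_iff.mp hx κ hκ k hk)) (mem_Env_iff.mp hy κ hκ k hk)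

lemma inv_mem_Env {α : Ordinal} (hIH : ∀ κ < α, EnvInvariant S κ)
    {x : G} (hx : x ∈ Env S α)
    (hn : ∀ κ < α, x ∈ Subgroup.normalizer (CIter (Env S κ) S κ)) : x⁻¹ ∈ Env S α := by
  refine mem_Env_iff.mpr fun κ hκ k hk ↦ ?_
  rw [pcomm_inv_left]
  exact (hn κ hκ _).mp ((hIH κ hκ).isSubgroupSet.inv_mem (mem_Env_iff.mp hx κ hκ k hk))

lemma isSubgroupSet_CIter_Env_add_one {ν : Ordinal} (hIH : ∀ κ < ν + 1, EnvInvariant S κ) :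
    IsSubgroupSet (CIter (Env S (ν + 1)) S (ν + 1)) := by
  have hν : IsSubgroupSet (CIter (Env S (ν + 1)) S ν) := by
    rw [CIter_Env_eq_of_le hIH (lt_add_one ν).le]
    exact (hIH ν (lt_add_one ν)).isSubgroupSet
  refine ⟨one_mem_CIter (one_mem_Env _) _, fun {x y} hx hy ↦ ?_, fun {x} hx ↦ ?_⟩
  · obtain ⟨hxE, hxN, hxS⟩ := mem_CIter_add_one.mp hx
    obtain ⟨hyE, hyN, hyS⟩ := mem_CIter_add_one.mp hy
    refine mem_CIter_add_one.mpr ⟨mul_mem_Env hIH hxE hyE,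
      fun β hβ ↦ Subgroup.mul_mem _ (hxN β hβ) (hyN β hβ), fun h hh ↦ ?_⟩
    rw [pcomm_mul_left]
    exact hν.mul_mem ((Subgroup.mem_set_normalizer_iff''.mp (hyN ν le_rfl) _).mp (hxS h hh))
      (hyS h hh)
  · obtain ⟨hxE, hxN, hxS⟩ := mem_CIter_add_one.mp hx
    have hxN' : ∀ κ < ν + 1, x ∈ Subgroup.normalizer (CIter (Env S κ) S κ) := fun κ hκ ↦ by
      simpa only [CIter_Env_eq_of_le hIH hκ.le] using hxN κ (lt_add_one_iff.mp hκ)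
    refine mem_CIter_add_one.mpr ⟨inv_mem_Env hIH hxE hxN',
      fun β hβ ↦ Subgroup.inv_mem _ (hxN β hβ), fun h hh ↦ ?_⟩
    rw [pcomm_inv_left]
    exact (hxN ν le_rfl _).mp (hν.inv_mem (hxS h hh))

lemma envInvariant (S : Set G) (α : Ordinal) : EnvInvariant S α := by
  induction α using WellFoundedLT.induction with
  | _ α hIH =>
  have hmono : MonotoneOn (CIter (Env S α) S) (Set.Iic α) :=
    CIter_monotoneOn fun ε hε ↦ CIter_Env_subset_add_one_of_lt hIH hε
  have hsub : IsSubgroupSet (CIter (Env S α) S α) := by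
    cases α using Ordinal.limitRecOn with
    | zero =>
      rw [CIter_zero]
      exact ⟨rfl, fun hx hy ↦ by simp_all, fun hx ↦ by simp_all⟩
    | add_one ν _ => exact isSubgroupSet_CIter_Env_add_one hIH
    | limit _ hα _ =>
      refine isSubgroupSet_CIter_of_isSuccLimit hmono hα fun β hβ ↦ ?_
      rw [CIter_Env_eq_of_le hIH hβ.le]
      exact (hIH β hβ).isSubgroupSet
  refine ⟨fun β hβ ↦ CIter_Env_eq_of_le hIH hβ, hsub, CIter_monotoneOn fun ε hε ↦ ?_⟩
  obtain hε | rfl := (lt_add_one_iff.mp hε).lt_or_eq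
  · exact CIter_Env_subset_add_one_of_lt hIH hε
  · exact CIter_subset_CIter_add_one_of_isSubgroupSet hmono (one_mem_Env ε) hsub

end Invariant

section Hypercentre

universe u

variable {G : Type*} [Group G] {S : Set G}

lemma CIter_Env_self_subset_Env {α γ : Ordinal.{u}} : CIter (Env S γ) S γ ⊆ Env S α :=
  CIter_Env_self_subset_Env_of_invariant fun κ _ ↦ envInvariant S κ

lemma CIter_Env_self_monotone : Monotone fun β : Ordinal ↦ CIter (Env S β) S β :=
  fun γ β h ↦ by
    dsimp only
    rw [← (envInvariant S β).CIter_eq γ h]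
    exact (envInvariant S β).monotoneOn (h.trans (lt_add_one β).le) (lt_add_one β).le h

lemma subset_Env (α : Ordinal) : S ⊆ Env S α := fun h hh ↦
  mem_Env_iff.mpr fun κ _ k hk ↦ by
    rw [← pcomm_inv]
    exact (envInvariant S κ).isSubgroupSet.inv_mem ((mem_CIter_add_one.mp hk).2.2 h hh)

lemma pcomm_mem_CIter_Env_of_mem_Env_add_one {ρ : Ordinal} {g c : G} (hg : g ∈ Env S (ρ + 1))
    (hc : c ∈ CIter (Env S ρ) S ρ) : pcomm g c ∈ CIter (Env S ρ) S ρ :=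
  (mem_Env_add_one.mp hg).2 c ((envInvariant S ρ).CIter_subset_CIter_add_one hc)

lemma mul_mul_inv_mem_of_mem_ZSet {μ ρ δ : Ordinal} {x u : G} (hxμ : x ∈ Env S μ)
    (hxρ : x ∈ Env S (ρ + 1)) (hu : u ∈ ZSet (Env S μ) δ) (huρ : u ∈ CIter (Env S ρ) S ρ) :
    x * u * x⁻¹ ∈ CIter (Env S ρ) S ρ := by
  have hK := (envInvariant S ρ).isSubgroupSet
  induction δ using Ordinal.limitRecOn generalizing u with
  | zero =>
    rw [ZSet_zero, Set.mem_singleton_iff] at hu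
    simpa [hu] using hK.one_mem
  | add_one η ih =>
    have hZ : pcomm u x ∈ ZSet (Env S μ) η := (mem_ZSet_add_one.mp hu).2 x hxμ
    have hρ : pcomm u x ∈ CIter (Env S ρ) S ρ := by
      rw [← pcomm_inv]
      exact hK.inv_mem (pcomm_mem_CIter_Env_of_mem_Env_add_one hxρ huρ)
    rw [mul_mul_inv_eq_mul_conj_pcomm, ← pcomm_inv,
      show x * (pcomm u x)⁻¹ * x⁻¹ = (x * pcomm u x * x⁻¹)⁻¹ by group]
    exact hK.mul_mem huρ (hK.inv_mem (ih hZ hρ))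
  | limit _ hδ ih =>
    rw [ZSet_limit hδ, Set.mem_iUnion₂] at hu
    obtain ⟨β, hβ, hu⟩ := hu
    exact ih β hβ hu huρ

lemma mem_Env_of_mem_ZSet_add_one {δ μ : Ordinal.{u}} (hδμ : δ ≤ μ)
    (hZδ : ZSet (Env S μ) δ ⊆ CIter (Env S δ) S δ) {x : G} (hx : x ∈ ZSet (Env S μ) (δ + 1))
    (α : Ordinal.{u}) : x ∈ Env S α := by
  obtain ⟨hxμ, hxZ⟩ := mem_ZSet_add_one.mp hx
  refine mem_Env_iff.mpr fun κ hκ k hk ↦ ?_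
  obtain hκμ | hμκ := lt_or_ge κ μ
  · exact mem_Env_iff.mp hxμ κ hκμ k hk
  · have hkμ : k ∈ Env S μ := Env_antitone hμκ (CIter_subset (one_mem_Env κ) _ hk)
    exact CIter_Env_self_monotone (hδμ.trans hμκ) (hZδ (hxZ k hkμ))

lemma mem_CIter_Env_of_mem_ZSet_add_one {δ μ : Ordinal} (hδμ : δ ≤ μ)
    (hZδ : ZSet (Env S μ) δ ⊆ CIter (Env S δ) S δ) {x : G} (hx : x ∈ ZSet (Env S μ) (δ + 1)) :
    x ∈ CIter (Env S (δ + 1)) S (δ + 1) := by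
  have hxE := mem_Env_of_mem_ZSet_add_one hδμ hZδ hx
  have hxZ := (mem_ZSet_add_one.mp hx).2
  refine mem_CIter_add_one.mpr ⟨hxE _, fun ρ hρ ↦ ?_, fun h hh ↦ ?_⟩
  · have hK := (envInvariant S ρ).isSubgroupSet
    rw [(envInvariant S (δ + 1)).CIter_eq ρ (hρ.trans (lt_add_one δ).le),
      Subgroup.mem_set_normalizer_iff]
    refine fun a ↦ ⟨fun ha ↦ ?_, fun ha ↦ ?_⟩
    · rw [mul_mul_inv_eq_mul_conj_pcomm]
      exact hK.mul_mem ha (mul_mul_inv_mem_of_mem_ZSet (hxE μ) (hxE _)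
        (hxZ a (CIter_Env_self_subset_Env ha)) (pcomm_mem_CIter_Env_of_mem_Env_add_one (hxE _) ha))
    · simpa [mul_assoc] using (envInvariant S ρ).inv_mul_mul_mem (hxE _) ha
  · rw [(envInvariant S (δ + 1)).CIter_eq δ (lt_add_one δ).le]
    exact hZδ (hxZ h (subset_Env μ hh))

lemma ZSet_Env_subset_CIter_Env {σ μ : Ordinal} (hσμ : σ ≤ μ) :
    ZSet (Env S μ) σ ⊆ CIter (Env S σ) S σ := by
  induction σ using Ordinal.limitRecOn with
  | zero => simp only [ZSet_zero, CIter_zero, subset_refl]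
  | add_one δ ih =>
    have hδμ : δ ≤ μ := (lt_add_one δ).le.trans hσμ
    exact fun x hx ↦ mem_CIter_Env_of_mem_ZSet_add_one hδμ (ih hδμ) hx
  | limit σ hσ ih =>
    rw [ZSet_limit hσ]
    exact Set.iUnion₂_subset fun β hβ ↦
      (ih β hβ (hβ.le.trans hσμ)).trans (CIter_Env_self_monotone hβ.le)

end Hypercentre

theorem stmt11 {G : Type*} [Group G] (H : Subgroup G) (α lam : Ordinal) (h : α ≤ lam) :
    ZSet (Env (H : Set G) α) α ⊆ Env (H : Set G) lam :=
  (ZSet_Env_subset_CIter_Env le_rfl).trans CIter_Env_self_subset_Env
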